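/- arXiv:math/0702454 — 3 statements merged into one kernel-verified Lean document; each statement's English description precedes it below -/
import Mathlib

section
/- For an algebra A, a multi-hypersubstitution ρ over M, a term identity t≈s, and colorations α_t, α_s: A satisfies ρ‾_{α_t}[t] ≈ ρ‾_{α_s}[s] if and only if the derived algebra ρ[A] satisfies t ≈ s (as a colored identity with colorations α_t, α_s). -/
/-- Terms of type τ: variables and applications of operation symbols. -/
inductive Tm (F : Type) (ar : F → ℕ) (X : Type) : Type where
  | var : X → Tm F ar X
  | app : (f : F) → (Fin (ar f) → Tm F ar X) → Tm F ar X

namespace Tm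

variable {F : Type} {ar : F → ℕ} {X Y : Type}

/-- Simultaneous substitution of terms for variables. -/
def subst (θ : X → Tm F ar Y) : Tm F ar X → Tm F ar Y
  | var x => θ x
  | app f ts => app f (fun i => subst θ (ts i))

/-- `isPos t p` : `p` is a position of the term `t`. -/
def isPos : Tm F ar X → List ℕ → Prop
  | _, [] => True
  | var _, _ :: _ => False
  | app f ts, i :: p => ∃ h : i < ar f, isPos (ts ⟨i, h⟩) p

/-- `replaceAt t p r` : positional composition `t(p; r)`, replacing the
subterm of `t` at position `p` by `r`. -/
def replaceAt : Tm F ar X → List ℕ → Tm F ar X → Tm F ar X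
  | _, [], r => r
  | var x, _ :: _, _ => var x
  | app f ts, i :: p, r => app f (fun j => if (j : ℕ) = i then replaceAt (ts j) p r else ts j)

end Tm

/-- A hypersubstitution assigns to each `n`-ary operation symbol an `n`-ary term. -/
def Hsub (F : Type) (ar : F → ℕ) : Type := (f : F) → Tm F ar (Fin (ar f))

namespace Tm
variable {F : Type} {ar : F → ℕ} {X : Type}

/-- Extension `σ̂` of a hypersubstitution to all terms. -/
def hApply (σ : Hsub F ar) : Tm F ar X → Tm F ar X
  | var x => var x
  | app f ts => subst (fun i => hApply σ (ts i)) (σ f)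

end Tm

/-- Composition of hypersubstitutions: `(σ₁ ∘ₕ σ₂)(f) = σ̂₁[σ₂(f)]`. -/
def hComp {F : Type} {ar : F → ℕ} (σ₁ σ₂ : Hsub F ar) : Hsub F ar :=
  fun f => Tm.hApply σ₁ (σ₂ f)

/-- The identity hypersubstitution `σ_id(f) = f(x₁,…,xₙ)`. -/
def hId {F : Type} {ar : F → ℕ} : Hsub F ar := fun f => Tm.app f (fun i => Tm.var i)

/-- `M` is a submonoid of `Hyp(τ)`. -/
def IsHMonoid {F : Type} {ar : F → ℕ} (M : Set (Hsub F ar)) : Prop :=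
  hId ∈ M ∧ ∀ σ₁ ∈ M, ∀ σ₂ ∈ M, hComp σ₁ σ₂ ∈ M

/-- Colored operation symbols `⟨f,q⟩`. -/
abbrev CF (F : Type) : Type := F × ℕ

abbrev car {F : Type} (ar : F → ℕ) : CF F → ℕ := fun fq => ar fq.1

/-- Colored terms of type τ: terms over colored operation symbols. -/
abbrev CTm (F : Type) (ar : F → ℕ) (X : Type) : Type := Tm (CF F) (car ar) X

namespace Tm
variable {F : Type} {ar : F → ℕ} {X : Type}

/-- Color every operation symbol of a term with the color `q`. -/
def recolor (q : ℕ) : Tm F ar X → CTm F ar X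
  | var x => var x
  | app f ts => app (f, q) (fun i => recolor q (ts i))

/-- Forget the colors of a colored term. -/
def forget : CTm F ar X → Tm F ar X
  | var x => var x
  | app fq ts => app fq.1 (fun i => forget (ts i))

/-- Equip the term `t` with the coloration `α : Pos(t) → ℕ` (given as a total
function on strings of naturals), obtaining the colored term `⟨t, α_t⟩`. -/
def colorWith (α : List ℕ → ℕ) : Tm F ar X → CTm F ar X
  | var x => var x
  | app f ts => app (f, α []) (fun i => colorWith (fun q => α (i.val :: q)) (ts i))

end Tm

/-- A multi-hypersubstitution over `M` is a map `ρ : ℕ → M`. -/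
def IsMh {F : Type} {ar : F → ℕ} (M : Set (Hsub F ar)) (ρ : ℕ → Hsub F ar) : Prop :=
  ∀ q, ρ q ∈ M

/-- Pointwise composition `∘_ch` of multi-hypersubstitutions. -/
def mComp {F : Type} {ar : F → ℕ} (ρ₁ ρ₂ : ℕ → Hsub F ar) : ℕ → Hsub F ar :=
  fun q => hComp (ρ₁ q) (ρ₂ q)

namespace Tm
variable {F : Type} {ar : F → ℕ} {X : Type}

/-- The extension `ρ‾` of a multi-hypersubstitution to colored terms: at a
symbol `⟨f,q⟩` apply `ρ(q)`, coloring all new symbols with `q`. -/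
def mhExt (ρ : ℕ → Hsub F ar) : CTm F ar X → CTm F ar X
  | var x => var x
  | app fq ts => subst (fun i => mhExt ρ (ts i)) (recolor fq.2 (ρ fq.2 fq.1))

end Tm

section Algebras
variable {F : Type} {ar : F → ℕ} {X : Type}

/-- Evaluation of a term in an interpretation of the operation symbols. -/
def Tm.eval {A : Type} (interp : (f : F) → (Fin (ar f) → A) → A) (env : X → A) :
    Tm F ar X → A
  | var x => env x
  | app f ts => interp f (fun i => Tm.eval interp env (ts i))

/-- An algebra of type τ. -/
structure Alg (F : Type) (ar : F → ℕ) where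
  carrier : Type
  interp : (f : F) → (Fin (ar f) → carrier) → carrier

/-- Identities of type τ (pairs of terms in variables `ℕ`). -/
abbrev Eqn (F : Type) (ar : F → ℕ) : Type := Tm F ar ℕ × Tm F ar ℕ

/-- `A ⊨ t ≈ s`. -/
def Alg.sat {F : Type} {ar : F → ℕ} (A : Alg F ar) (e : Eqn F ar) : Prop :=
  ∀ env : ℕ → A.carrier, Tm.eval A.interp env e.1 = Tm.eval A.interp env e.2

/-- The interpretation of colored symbols in the derived algebra `ρ[A]`:
`⟨f,q⟩` is interpreted as the term operation `(ρ(q)(f))^A`. -/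
def derivedInterp {A : Type} (ρ : ℕ → Hsub F ar)
    (interp : (f : F) → (Fin (ar f) → A) → A) :
    (fq : CF F) → (Fin (car ar fq) → A) → A :=
  fun fq as => Tm.eval interp (fun i => as i) (ρ fq.2 fq.1)

/-- The derived algebra `ρ[A]` (an algebra of the colored type). -/
def Alg.derived (A : Alg F ar) (ρ : ℕ → Hsub F ar) : Alg (CF F) (car ar) :=
  ⟨A.carrier, derivedInterp ρ A.interp⟩

end Algebras

section Identities
variable {F : Type} {ar : F → ℕ}

/-- `ρ‾_{α_t}[t]` : the term obtained by applying the multi-hypersubstitution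
`ρ` to `t` colored by `α`. -/
def mhImage (ρ : ℕ → Hsub F ar) (α : List ℕ → ℕ) (t : Tm F ar ℕ) : Tm F ar ℕ :=
  Tm.forget (Tm.mhExt ρ (Tm.colorWith α t))

/-- `χ_M[Σ]` : the hypersubstitution closure of a set of identities. -/
def hypClosure (M : Set (Hsub F ar)) (Sg : Set (Eqn F ar)) : Set (Eqn F ar) :=
  {e | ∃ t s σ, (t, s) ∈ Sg ∧ σ ∈ M ∧ e = (Tm.hApply σ t, Tm.hApply σ s)}

/-- `χ_M^c[Σ]` : the multi-hypersubstitution closure of a set of identities. -/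
def mhClosure (M : Set (Hsub F ar)) (Sg : Set (Eqn F ar)) : Set (Eqn F ar) :=
  {e | ∃ t s ρ αt αs, (t, s) ∈ Sg ∧ IsMh M ρ ∧
        e = (mhImage ρ αt t, mhImage ρ αs s)}

/-- `Id R` : the identities satisfied in all algebras of the class `R`. -/
def IdK (R : Set (Alg F ar)) : Set (Eqn F ar) := {e | ∀ A ∈ R, A.sat e}

/-- `Mod Σ` : the class of algebras satisfying all identities of `Σ`. -/
def ModK (Sg : Set (Eqn F ar)) : Set (Alg F ar) := {A | ∀ e ∈ Sg, A.sat e}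

/-- `HC_M Id R` : the `M`-multi-hyperidentities of the class `R`. -/
def HCId (M : Set (Hsub F ar)) (R : Set (Alg F ar)) : Set (Eqn F ar) :=
  {e | mhClosure M {e} ⊆ IdK R}

/-- `HC_M Mod Σ` : the algebras `M`-multi-hypersatisfying `Σ`. -/
def HCMod (M : Set (Hsub F ar)) (Sg : Set (Eqn F ar)) : Set (Alg F ar) :=
  {A | ∀ e ∈ mhClosure M Sg, A.sat e}

end Identities


lemma eval_forget_subst_recolor {F : Type} {ar : F → ℕ} {A : Type}
    (interp : (f : F) → (Fin (ar f) → A) → A) (env : ℕ → A)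
    (ρ : ℕ → Hsub F ar) (q : ℕ) {n : ℕ} (θ : Fin n → CTm F ar ℕ)
    (u : Tm F ar (Fin n)) :
    Tm.eval interp env (Tm.forget (Tm.subst θ (Tm.recolor q u))) =
      Tm.eval interp (fun i => Tm.eval interp env (Tm.forget (θ i))) u := by
  induction u with
  | var x => rfl
  | app f ts ih =>
    simp only [Tm.recolor, Tm.subst, Tm.forget, Tm.eval]
    exact congrArg _ (funext fun i => ih i)

lemma eval_derived_eq {F : Type} {ar : F → ℕ} (A : Alg F ar)
    (ρ : ℕ → Hsub F ar) (env : ℕ → A.carrier) (ct : CTm F ar ℕ) :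
    Tm.eval (derivedInterp ρ A.interp) env ct =
      Tm.eval A.interp env (Tm.forget (Tm.mhExt ρ ct)) := by
  induction ct with
  | var x => rfl
  | app fq ts ih =>
    simp only [Tm.eval, Tm.mhExt, derivedInterp,
      eval_forget_subst_recolor A.interp env ρ fq.2 (fun i => Tm.mhExt ρ (ts i)) (ρ fq.2 fq.1)]
    exact congrArg (fun g => Tm.eval A.interp g (ρ fq.2 fq.1)) (funext fun i => ih i)

/-- `A ⊨ ρ‾_{α_t}[t] ≈ ρ‾_{α_s}[s]` iff the derived algebra
`ρ[A]` satisfies `t ≈ s` as a colored identity with colorations `α_t, α_s`. -/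
theorem sat_mhImage_iff_derived {F : Type} {ar : F → ℕ}
    (M : Set (Hsub F ar)) (hM : IsHMonoid M)
    (A : Alg F ar) (ρ : ℕ → Hsub F ar) (hρ : IsMh M ρ)
    (t s : Tm F ar ℕ) (αt αs : List ℕ → ℕ) :
    A.sat (mhImage ρ αt t, mhImage ρ αs s) ↔
      (∀ env : ℕ → A.carrier,
        Tm.eval (derivedInterp ρ A.interp) env (Tm.colorWith αt t) =
          Tm.eval (derivedInterp ρ A.interp) env (Tm.colorWith αs s)) := by
  unfold Alg.sat mhImage
  constructor
  · intro h env
    rw [eval_derived_eq, eval_derived_eq]; exact h env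
  · intro h env
    have := h env
    rwa [eval_derived_eq, eval_derived_eq] at this
end

section
/- Completeness of multi-hyperequational logic: for every set Σ of identities of type τ and every identity t≈s, Σ ⊨_Mh t≈s if and only if Σ ⊢_Mh t≈s. -/
/-- `Mh`-deduction: the rules of equational logic (a fully invariant
congruence) together with the multi-hypersubstitution rule `Mh₁`. -/
inductive MhDed {F : Type} {ar : F → ℕ} (M : Set (Hsub F ar)) (Sg : Set (Eqn F ar)) :
    Tm F ar ℕ → Tm F ar ℕ → Prop
  | ax {t s} : (t, s) ∈ Sg → MhDed M Sg t s
  | refl (t) : MhDed M Sg t t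
  | symm {t s} : MhDed M Sg t s → MhDed M Sg s t
  | trans {t s r} : MhDed M Sg t s → MhDed M Sg s r → MhDed M Sg t r
  | subst {t s} (θ : ℕ → Tm F ar ℕ) :
      MhDed M Sg t s → MhDed M Sg (Tm.subst θ t) (Tm.subst θ s)
  | replace {t s} (r : Tm F ar ℕ) (p : List ℕ) : r.isPos p → MhDed M Sg t s →
      MhDed M Sg (r.replaceAt p t) (r.replaceAt p s)
  | mh {t s} (ρ : ℕ → Hsub F ar) (αt αs : List ℕ → ℕ) : IsMh M ρ → MhDed M Sg t s →
      MhDed M Sg (mhImage ρ αt t) (mhImage ρ αs s)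

/-- `Mh(Σ)` : the `Mh`-deductive closure of `Σ` (the smallest
`Mh`-deductively closed set containing `Σ`). -/
def MhSet {F : Type} {ar : F → ℕ} (M : Set (Hsub F ar)) (Sg : Set (Eqn F ar)) :
    Set (Eqn F ar) :=
  {e | MhDed M Sg e.1 e.2}


section Aux
variable {F : Type} {ar : F → ℕ}

lemma MhDed.cut {M : Set (Hsub F ar)} {Sg : Set (Eqn F ar)} {t s u v : Tm F ar ℕ}
    (hts : MhDed M Sg t s) (h : MhDed M {(t, s)} u v) : MhDed M Sg u v := by
  induction h with
  | ax h =>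
    simp only [Set.mem_singleton_iff, Prod.mk.injEq] at h
    obtain ⟨h1, h2⟩ := h; subst h1; subst h2; exact hts
  | refl t => exact .refl t
  | symm _ ih => exact ih.symm
  | trans _ _ ih1 ih2 => exact ih1.trans ih2
  | subst θ _ ih => exact ih.subst θ
  | replace r p hp _ ih => exact ih.replace r p hp
  | mh ρ αt αs hρ _ ih => exact ih.mh ρ αt αs hρ

lemma MhDed.app_congr {M : Set (Hsub F ar)} {Sg : Set (Eqn F ar)}
    (f : F) (u v : Fin (ar f) → Tm F ar ℕ)
    (h : ∀ i, MhDed M Sg (u i) (v i)) :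
    MhDed M Sg (Tm.app f u) (Tm.app f v) := by
  let mix : ℕ → Fin (ar f) → Tm F ar ℕ := fun k i => if i.val < k then v i else u i
  have key : ∀ k, k ≤ ar f → MhDed M Sg (Tm.app f u) (Tm.app f (mix k)) := by
    intro k
    induction k with
    | zero =>
      intro _
      have hmix : mix 0 = u := by funext i; simp [mix]
      rw [hmix]; exact .refl _
    | succ k ih =>
      intro hk
      have hk' : k < ar f := hk
      have hpos : (Tm.app f (mix k)).isPos [k] := ⟨hk', by simp [Tm.isPos]⟩
      have step := (h ⟨k, hk'⟩).replace (Tm.app f (mix k)) [k] hpos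
      have e1 : (Tm.app f (mix k)).replaceAt [k] (u ⟨k, hk'⟩) = Tm.app f (mix k) := by
        show Tm.app f _ = _
        congr 1
        funext j
        by_cases hj : (j : ℕ) = k
        · have : j = ⟨k, hk'⟩ := Fin.ext hj
          subst this
          simp [mix, Tm.replaceAt]
        · simp [hj]
      have e2 : (Tm.app f (mix k)).replaceAt [k] (v ⟨k, hk'⟩) = Tm.app f (mix (k + 1)) := by
        show Tm.app f _ = Tm.app f _
        congr 1
        funext j
        by_cases hj : (j : ℕ) = k
        · have : j = ⟨k, hk'⟩ := Fin.ext hj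
          subst this
          simp [mix, Tm.replaceAt]
        · have : (j : ℕ) < k + 1 ↔ (j : ℕ) < k := by omega
          simp [hj, mix, this]
      rw [e1, e2] at step
      exact (ih (le_of_lt hk')).trans step
  have hmix : mix (ar f) = v := by funext i; simp [mix, i.isLt]
  have := key (ar f) le_rfl
  rwa [hmix] at this

lemma Tm.subst_var (u : Tm F ar ℕ) : Tm.subst Tm.var u = u := by
  induction u with
  | var x => rfl
  | app f ts ih => show Tm.app f _ = _; congr 1; funext i; exact ih i

def tmSetoid (M : Set (Hsub F ar)) (Sg : Set (Eqn F ar)) : Setoid (Tm F ar ℕ) where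
  r u v := MhDed M Sg u v
  iseqv := ⟨.refl, .symm, .trans⟩

noncomputable def quotAlg (M : Set (Hsub F ar)) (Sg : Set (Eqn F ar)) : Alg F ar where
  carrier := Quotient (tmSetoid M Sg)
  interp f qs := Quotient.mk _ (Tm.app f (fun i => (qs i).out))

lemma eval_mk {M : Set (Hsub F ar)} {Sg : Set (Eqn F ar)}
    (θ : ℕ → Tm F ar ℕ) (u : Tm F ar ℕ) :
    Tm.eval (quotAlg M Sg).interp (fun n => Quotient.mk (tmSetoid M Sg) (θ n)) u
      = Quotient.mk (tmSetoid M Sg) (Tm.subst θ u) := by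
  induction u with
  | var x => rfl
  | app f ts ih =>
    show Quotient.mk _ (Tm.app f fun i =>
      (Tm.eval (quotAlg M Sg).interp (fun n => Quotient.mk (tmSetoid M Sg) (θ n)) (ts i)).out) = _
    apply Quotient.sound
    apply MhDed.app_congr
    intro i
    rw [ih i]
    exact @Quotient.mk_out _ (tmSetoid M Sg) (Tm.subst θ (ts i))

end Aux

/-- Completeness of multi-hyperequational logic:
`Σ ⊨_Mh t≈s ↔ Σ ⊢_Mh t≈s`. -/
theorem mh_completeness {F : Type} {ar : F → ℕ}
    (M : Set (Hsub F ar)) (hM : IsHMonoid M)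
    (Sg : Set (Eqn F ar)) (t s : Tm F ar ℕ) :
    (∀ A : Alg F ar, (∀ e ∈ MhSet M Sg, A.sat e) →
        ∀ e ∈ MhSet M {(t, s)}, A.sat e) ↔ MhDed M Sg t s := by
  constructor
  · intro h
    have hA : ∀ e ∈ MhSet M Sg, (quotAlg M Sg).sat e := by
      intro e he env
      have henv : env = fun n => Quotient.mk (tmSetoid M Sg) (env n).out := by
        funext n; exact (Quotient.out_eq (s := tmSetoid M Sg) (env n)).symm
      rw [henv, eval_mk, eval_mk]
      exact Quotient.sound ((he : MhDed M Sg e.1 e.2).subst _)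
    have hts := h (quotAlg M Sg) hA (t, s) (MhDed.ax rfl)
      (fun n => Quotient.mk (tmSetoid M Sg) (Tm.var n))
    rw [show (fun n => Quotient.mk (tmSetoid M Sg) (Tm.var n))
          = (fun n => Quotient.mk (tmSetoid M Sg) (Tm.var (F := F) (ar := ar) n)) from rfl,
        eval_mk Tm.var, eval_mk Tm.var] at hts
    have := Quotient.exact hts
    rwa [Tm.subst_var, Tm.subst_var] at this
  · intro h A hA e he
    exact hA e (h.cut he)
end

section
/- The set Thyp(τ,M) of Mh-transducers of type τ over a monoid M ⊆ Hyp(τ), with superposition (A^{ρ₁} ∘ A^{ρ₂})(⟨t,α_t⟩) := A^{ρ₁}(A^{ρ₂}(⟨t,α_t⟩)), is a monoid isomorphic to the monoid Mhyp(τ,M) of multi-hypersubstitutions over M. -/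
/-- The monoid `Mhyp(τ,M)` of multi-hypersubstitutions over `M`. -/
def Mhyp {F : Type} (ar : F → ℕ) (M : Set (Hsub F ar)) : Type :=
  {ρ : ℕ → Hsub F ar // IsMh M ρ}

/-- The set `Thyp(τ,M)` of `Mh`-transducers over `M`, identified with their
actions on colored terms: by the run lemma, the action of the transducer
`A^ρ` coincides with the extension `ρ‾`. -/
def Thyp {F : Type} (ar : F → ℕ) (M : Set (Hsub F ar)) : Type :=
  {T : CTm F ar ℕ → CTm F ar ℕ // ∃ ρ : ℕ → Hsub F ar, IsMh M ρ ∧ T = Tm.mhExt ρ}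

namespace Tm
variable {F : Type} {ar : F → ℕ} {X Y Z : Type}

theorem subst_var_s19 (t : Tm F ar X) : subst var t = t := by
  induction t with
  | var x => rfl
  | app f ts ih => simp [subst, ih]

theorem subst_subst (θ₂ : Y → Tm F ar Z) (θ₁ : X → Tm F ar Y) (t : Tm F ar X) :
    subst θ₂ (subst θ₁ t) = subst (fun x => subst θ₂ (θ₁ x)) t := by
  induction t with
  | var x => rfl
  | app f ts ih => simp [subst, ih]

theorem forget_recolor (q : ℕ) (t : Tm F ar X) : forget (recolor q t) = t := by
  induction t with
  | var x => rfl
  | app f ts ih => simp [recolor, forget, ih]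

theorem recolor_subst (q : ℕ) (θ : X → Tm F ar Y) (t : Tm F ar X) :
    recolor q (subst θ t) = subst (fun x => recolor q (θ x)) (recolor q t) := by
  induction t with
  | var x => rfl
  | app f ts ih => simp [subst, recolor, ih]

theorem mhExt_subst_recolor (ρ : ℕ → Hsub F ar) (q : ℕ)
    (θ : X → CTm F ar Y) (s : Tm F ar X) :
    mhExt ρ (subst θ (recolor q s)) =
      subst (fun x => mhExt ρ (θ x)) (recolor q (hApply (ρ q) s)) := by
  induction s with
  | var x => rfl
  | app f ts ih =>
    show mhExt ρ (app (f, q) _) = _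
    rw [show hApply (ρ q) (app f ts) =
        subst (fun i => hApply (ρ q) (ts i)) (ρ q f) from rfl,
      recolor_subst, subst_subst]
    show subst (fun i => mhExt ρ (subst θ (recolor q (ts i)))) (recolor q (ρ q f)) = _
    simp only [ih]

theorem mhExt_mComp (ρ₁ ρ₂ : ℕ → Hsub F ar) (t : CTm F ar X) :
    mhExt (mComp ρ₁ ρ₂) t = mhExt ρ₁ (mhExt ρ₂ t) := by
  induction t with
  | var x => rfl
  | app fq ts ih =>
    show subst _ (recolor fq.2 (hApply (ρ₁ fq.2) (ρ₂ fq.2 fq.1))) = _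
    rw [show mhExt ρ₂ (app fq ts) =
        subst (fun i => mhExt ρ₂ (ts i)) (recolor fq.2 (ρ₂ fq.2 fq.1)) from rfl,
      mhExt_subst_recolor]
    simp only [ih]

theorem mhExt_id (t : CTm F ar X) : mhExt (fun _ => (hId : Hsub F ar)) t = t := by
  induction t with
  | var x => rfl
  | app fq ts ih =>
    show subst _ (recolor fq.2 (app fq.1 fun i => var i)) = _
    simp only [recolor, subst, ih]

theorem forget_subst (θ : X → CTm F ar Y) (t : CTm F ar X) :
    forget (subst θ t) = subst (fun x => forget (θ x)) (forget t) := by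
  induction t with
  | var x => rfl
  | app fq ts ih => simp [subst, forget, ih]

theorem ren_inj {g : X → Y} (hg : Function.Injective g) (t : Tm F ar X) :
    ∀ s, subst (fun x => var (g x)) t = subst (fun x => var (g x)) s → t = s := by
  induction t with
  | var x =>
    intro s h
    cases s with
    | var y => simp only [subst, var.injEq] at h; exact congrArg var (hg h)
    | app f ts => simp [subst] at h
  | app f ts ih =>
    intro s h
    cases s with
    | var y => simp [subst] at h
    | app f' ts' =>
      simp only [subst] at h
      obtain ⟨h1, h2⟩ := app.inj h
      subst h1
      rw [heq_iff_eq] at h2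
      exact congrArg (app f) (funext fun i => ih i _ (congrFun h2 i))

theorem mhExt_inj {ar' : F → ℕ} {ρ₁ ρ₂ : ℕ → Hsub F ar'}
    (h : (mhExt ρ₁ : CTm F ar' ℕ → CTm F ar' ℕ) = mhExt ρ₂) : ρ₁ = ρ₂ := by
  funext q f
  have h1 := congrFun h (app (f, q) (fun i => var (i : ℕ)))
  have h2 : ∀ ρ : ℕ → Hsub F ar',
      forget (mhExt ρ (app (f, q) (fun i => var (i : ℕ)) : CTm F ar' ℕ)) =
      subst (fun i : Fin (ar' f) => var (i : ℕ)) (ρ q f) := by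
    intro ρ
    show forget (subst (fun i : Fin (ar' f) => mhExt ρ (var (i : ℕ))) (recolor q (ρ q f))) = _
    rw [forget_subst, forget_recolor]
    rfl
  exact ren_inj Fin.val_injective (ρ₁ q f) _ (by rw [← h2 ρ₁, ← h2 ρ₂, h1])

end Tm


/-- `Thyp(τ,M)`, under superposition, is a monoid isomorphic to
`Mhyp(τ,M)`: there is a bijection `ρ ↦ A^ρ` carrying `∘_ch` to superposition
and `ρ_id` to the identity transducer. -/
theorem thyp_iso_mhyp {F : Type} {ar : F → ℕ}
    (M : Set (Hsub F ar)) (hM : IsHMonoid M) :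
    ∃ φ : Mhyp ar M → Thyp ar M,
      Function.Bijective φ ∧
      (∀ ρ : Mhyp ar M, (φ ρ).1 = Tm.mhExt ρ.1) ∧
      (∀ ρ₁ ρ₂ : Mhyp ar M,
        (φ ⟨mComp ρ₁.1 ρ₂.1,
            fun q => hM.2 _ (ρ₁.2 q) _ (ρ₂.2 q)⟩).1 = (φ ρ₁).1 ∘ (φ ρ₂).1) ∧
      (φ ⟨fun _ => hId, fun _ => hM.1⟩).1 = id := by
  refine ⟨fun ρ => ⟨Tm.mhExt ρ.1, ρ.1, ρ.2, rfl⟩, ⟨?_, ?_⟩, fun ρ => rfl, ?_, ?_⟩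
  · intro ρ₁ ρ₂ h
    exact Subtype.ext (Tm.mhExt_inj (congrArg Subtype.val h))
  · rintro ⟨T, ρ, hρ, rfl⟩
    exact ⟨⟨ρ, hρ⟩, rfl⟩
  · intro ρ₁ ρ₂
    funext t
    exact Tm.mhExt_mComp ρ₁.1 ρ₂.1 t
  · funext t
    exact Tm.mhExt_id t
end
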